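/- Let q be a prime power, r ≥ 2, and n = (q^r − 1)/(q − 1). Then the v-number of the closed neighborhood ideal of the Hamming graph Γ(n,q) satisfies q^{n−r} ≤ v(N_{Γ(n,q)}) ≤ q^{n−1}(q−1). -/

import Mathlib

open Finset MvPolynomial

noncomputable section
open scoped Classical

variable {V : Type*}

/-- The closed neighborhood of a vertex, as a finite set. -/
def closedNbhd [Fintype V] (G : SimpleGraph V) (v : V) : Finset V :=
  Finset.univ.filter fun u => u = v ∨ G.Adj v u

/-- The closed neighborhood of a set of vertices. -/
def closedNbhdSet [Fintype V] (G : SimpleGraph V) (A : Finset V) : Finset V :=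
  A.biUnion (closedNbhd G)

/-- A dominating set of a graph. -/
def IsDominatingSet [Fintype V] (G : SimpleGraph V) (D : Finset V) : Prop :=
  ∀ v : V, ∃ u ∈ D, v ∈ closedNbhd G u

/-- A minimal dominating set: dominating, and no proper subset dominates. -/
def IsMinimalDominatingSet [Fintype V] (G : SimpleGraph V) (D : Finset V) : Prop :=
  IsDominatingSet G D ∧ ∀ D' ⊂ D, ¬ IsDominatingSet G D'

/-- The set of external and self-private neighbors of D: the vertices whose
closed neighborhood meets D in exactly one vertex. -/
def privateNbrs [Fintype V] (G : SimpleGraph V) (D : Finset V) : Finset V :=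
  Finset.univ.filter fun v => (closedNbhd G v ∩ D).card = 1

/-- The closed neighborhood ideal of a graph, in the polynomial ring over K with
one variable for each vertex. -/
def cnIdeal (K : Type*) [Field K] [Fintype V] (G : SimpleGraph V) :
    Ideal (MvPolynomial V K) :=
  Ideal.span (Set.range fun v => ∏ u ∈ closedNbhd G v, X u)

/-- The ideal generated by the variables indexed by a set of vertices D. -/
def vertexIdeal (K : Type*) [Field K] (D : Finset V) : Ideal (MvPolynomial V K) :=
  Ideal.span ((fun v => (X v : MvPolynomial V K)) '' ↑D)

/-- The v-number of a graded ideal: the least degree d of a homogeneous polynomial f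
such that the colon ideal (I : f) is an associated prime of S/I. -/
def vNumber {K : Type*} [Field K] (I : Ideal (MvPolynomial V K)) : ℕ :=
  sInf {d : ℕ | ∃ f : MvPolynomial V K, f.IsHomogeneous d ∧
    Submodule.colon I (Ideal.span {f}) ∈
      associatedPrimes (MvPolynomial V K) (MvPolynomial V K ⧸ I)}

end

/-- The Hamming graph on F^m: vertices are m-tuples over F, and two vertices are
adjacent if and only if their Hamming distance is 1. -/
def hammingGraph (F : Type*) [DecidableEq F] (m : ℕ) : SimpleGraph (Fin m → F) where
  Adj x y := hammingDist x y = 1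
  symm := by constructor; intro x y h; show hammingDist y x = 1; rwa [hammingDist_comm]
  loopless := by constructor; intro x h; change hammingDist x x = 1 at h; simp [hammingDist_self] at h

/-! ### Auxiliary lemmas -/

section AuxHamming
open scoped Classical

variable {F : Type*} [DecidableEq F] {n : ℕ}

lemma hammingDist_update_le (v : Fin n → F) (i : Fin n) (a : F) :
    hammingDist v (Function.update v i a) ≤ 1 := by
  classical
  calc hammingDist v (Function.update v i a)
      ≤ ({i} : Finset (Fin n)).card := by
        apply Finset.card_le_card
        intro j hj
        simp only [hammingDist, Finset.mem_filter] at hj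
        rcases hj with ⟨-, hj⟩
        simp only [Finset.mem_singleton]
        by_contra hne
        exact hj (by rw [Function.update_of_ne hne])
    _ = 1 := Finset.card_singleton i

/-- two distinct "midpoints" between vertices at Hamming distance ≤ 2 -/
lemma exists_two_midpoints [Nontrivial F] (hn : 1 ≤ n) (v z : Fin n → F)
    (h : hammingDist v z ≤ 2) :
    ∃ s t : Fin n → F, s ≠ t ∧ hammingDist v s ≤ 1 ∧ hammingDist s z ≤ 1 ∧
      hammingDist v t ≤ 1 ∧ hammingDist t z ≤ 1 := by
  classical
  set T : Finset (Fin n) := {i | v i ≠ z i} with hT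
  have hTd : hammingDist v z = T.card := rfl
  have key : ∀ j, j ∉ T → v j = z j := by
    intro j hj
    by_contra hne
    exact hj (by simp [hT, hne])
  have hc2 : T.card ≤ 2 := by omega
  interval_cases hc : T.card
  · -- v = z
    have hvz : v = z := eq_of_hammingDist_eq_zero (by omega)
    obtain ⟨b, hb⟩ := exists_ne (v ⟨0, hn⟩)
    refine ⟨v, Function.update v ⟨0, hn⟩ b, ?_, by simp [hammingDist_self], by rw [hvz]; simp [hammingDist_self], hammingDist_update_le _ _ _, ?_⟩
    · intro hvt
      have := congrFun hvt ⟨0, hn⟩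
      simp [Function.update_self] at this
      exact hb this.symm
    · rw [← hvz, hammingDist_comm]
      exact hammingDist_update_le _ _ _
  · -- distance 1
    refine ⟨v, z, ?_, by simp [hammingDist_self], by omega, by omega, by simp [hammingDist_self]⟩
    intro hvz
    rw [hvz, hammingDist_self] at hTd
    omega
  · -- distance 2
    obtain ⟨i, j, hij, hTij⟩ := Finset.card_eq_two.mp (by omega : T.card = 2)
    have hi : v i ≠ z i := by
      have : i ∈ T := by rw [hTij]; simp
      simpa [hT] using this
    refine ⟨Function.update v i (z i), Function.update v j (z j), ?_, hammingDist_update_le _ _ _, ?_, hammingDist_update_le _ _ _, ?_⟩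
    · intro hst
      have := congrFun hst i
      rw [Function.update_self, Function.update_of_ne hij] at this
      exact hi this.symm
    · calc hammingDist (Function.update v i (z i)) z
          ≤ ({j} : Finset (Fin n)).card := by
            apply Finset.card_le_card
            intro k hk
            simp only [hammingDist, Finset.mem_filter] at hk
            rcases hk with ⟨-, hk⟩
            simp only [Finset.mem_singleton]
            by_contra hkj
            rcases eq_or_ne k i with rfl | hki
            · rw [Function.update_self] at hk; exact hk rfl
            · rw [Function.update_of_ne hki] at hk
              have : k ∈ T := by simp [hT, hk]
              rw [hTij] at this
              simp [hki, hkj] at this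
        _ = 1 := Finset.card_singleton j
    · calc hammingDist (Function.update v j (z j)) z
          ≤ ({i} : Finset (Fin n)).card := by
            apply Finset.card_le_card
            intro k hk
            simp only [hammingDist, Finset.mem_filter] at hk
            rcases hk with ⟨-, hk⟩
            simp only [Finset.mem_singleton]
            by_contra hki
            rcases eq_or_ne k j with rfl | hkj
            · rw [Function.update_self] at hk; exact hk rfl
            · rw [Function.update_of_ne hkj] at hk
              have : k ∈ T := by simp [hT, hk]
              rw [hTij] at this
              simp [hki, hkj] at this
        _ = 1 := Finset.card_singleton i

end AuxHamming

noncomputable section AuxMonomial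
open scoped Classical

variable {V : Type*} {K : Type*} [Field K]

/-- exponent finsupp of a squarefree monomial with support A -/
def expOf (A : Finset V) : V →₀ ℕ := ∑ u ∈ A, Finsupp.single u 1

lemma expOf_apply (A : Finset V) (u : V) : expOf A u = if u ∈ A then 1 else 0 := by
  classical
  rw [expOf, Finset.sum_apply']
  rcases Finset.decidableMem u A with h | h
  · rw [Finset.sum_eq_zero, if_neg h]
    intro x hx
    exact Finsupp.single_apply_eq_zero.mpr (fun hxu => absurd (hxu ▸ hx) h)
  · rw [Finset.sum_eq_single u, Finsupp.single_eq_same, if_pos h]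
    · intro x hx hxu
      exact Finsupp.single_apply_eq_zero.mpr (fun h' => absurd h'.symm hxu)
    · intro h'; exact absurd h h'

lemma prod_X_eq_monomial (A : Finset V) :
    (∏ u ∈ A, X u : MvPolynomial V K) = monomial (expOf A) 1 := by
  classical
  induction A using Finset.induction with
  | empty => simp [expOf]
  | insert _ _ h ih =>
    rw [Finset.prod_insert h, ih]
    rw [show (X _ : MvPolynomial V K) = monomial (Finsupp.single _ 1) 1 from rfl,
      monomial_mul, one_mul]
    congr 1
    rw [expOf, expOf, Finset.sum_insert h]

lemma expOf_le_iff {A : Finset V} {μ : V →₀ ℕ} : expOf A ≤ μ ↔ ∀ u ∈ A, 1 ≤ μ u := by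
  classical
  rw [Finsupp.le_iff]
  constructor
  · intro h u hu
    have := h u ?_
    · rwa [expOf_apply, if_pos hu] at this
    · rw [Finsupp.mem_support_iff, expOf_apply, if_pos hu]; omega
  · intro h u hu
    rw [expOf_apply]
    rcases Finset.decidableMem u A with h' | h'
    · simp [h']
    · simp only [if_pos h']
      exact h u h'

lemma mem_cnIdeal_iff [Fintype V] (G : SimpleGraph V) (p : MvPolynomial V K) :
    p ∈ cnIdeal K G ↔
      ∀ μ ∈ p.support, ∃ v : V, expOf (closedNbhd G v) ≤ μ := by
  classical
  have hgen : cnIdeal K G = Ideal.span ((fun s => monomial s (1 : K)) ''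
      (Set.range fun v => expOf (closedNbhd G v))) := by
    unfold cnIdeal
    congr 1
    ext y
    simp only [Set.mem_range, Set.mem_image, prod_X_eq_monomial]
    constructor
    · rintro ⟨v, rfl⟩; exact ⟨_, ⟨v, rfl⟩, rfl⟩
    · rintro ⟨s, ⟨v, rfl⟩, rfl⟩; exact ⟨v, rfl⟩
  rw [hgen, mem_ideal_span_monomial_image]
  simp only [Set.mem_range]
  constructor
  · intro h μ hμ
    obtain ⟨s, ⟨v, rfl⟩, hs⟩ := h μ hμ
    exact ⟨v, hs⟩
  · intro h μ hμ
    obtain ⟨v, hv⟩ := h μ hμ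
    exact ⟨_, ⟨v, rfl⟩, hv⟩

lemma isPrime_span_X_image (D : Set V) :
    (Ideal.span ((X : V → MvPolynomial V K) '' D)).IsPrime := by
  classical
  set c : V → MvPolynomial V K := fun v => if v ∈ D then 0 else X v with hc
  set χ : MvPolynomial V K →ₐ[K] MvPolynomial V K := aeval c with hχ
  have hker : Ideal.span ((X : V → MvPolynomial V K) '' D) = RingHom.ker χ.toRingHom := by
    apply le_antisymm
    · rw [Ideal.span_le]
      rintro y ⟨v, hv, rfl⟩
      simp [RingHom.mem_ker, hχ, hc, hv]
    · intro g hg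
      rw [RingHom.mem_ker] at hg
      rw [show χ.toRingHom g = χ g from rfl] at hg
      set Q := Ideal.Quotient.mkₐ K (Ideal.span ((X : V → MvPolynomial V K) '' D)) with hQ
      have hcomp : Q.comp χ = Q := by
        apply MvPolynomial.algHom_ext
        intro v
        simp only [AlgHom.comp_apply, hχ, aeval_X, hc]
        rcases em (v ∈ D) with h | h
        · rw [if_pos h, map_zero, hQ, Ideal.Quotient.mkₐ_eq_mk, eq_comm,
            Ideal.Quotient.eq_zero_iff_mem]
          exact Ideal.subset_span ⟨v, h, rfl⟩
        · rw [if_neg h]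
      have h2 : Q (χ g) = Q g := by rw [← AlgHom.comp_apply, hcomp]
      have h3 : χ g = 0 := hg
      rw [h3, map_zero] at h2
      have h4 := h2.symm
      rw [hQ, Ideal.Quotient.mkₐ_eq_mk, Ideal.Quotient.eq_zero_iff_mem] at h4
      exact h4
  rw [hker]
  exact RingHom.ker_isPrime _

lemma mem_colon_singleton' (I : Ideal (MvPolynomial V K)) (f g : MvPolynomial V K) :
    g ∈ Submodule.colon I (Ideal.span {f}) ↔ g * f ∈ I := by
  rw [show (Ideal.span {f} : Ideal (MvPolynomial V K)) =
      Submodule.span (MvPolynomial V K) {f} from rfl,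
    Submodule.mem_colon]
  constructor
  · intro h; exact h f (Submodule.subset_span (Set.mem_singleton f))
  · intro h s hs
    obtain ⟨c, rfl⟩ := Ideal.mem_span_singleton'.mp hs
    rw [smul_eq_mul, ← mul_assoc, mul_comm g c, mul_assoc]; exact I.mul_mem_left c h

lemma colon_eq_annihilator (I : Ideal (MvPolynomial V K)) (f : MvPolynomial V K) :
    Submodule.colon I (Ideal.span {f}) =
      (Submodule.span (MvPolynomial V K)
        {(Ideal.Quotient.mk I f : MvPolynomial V K ⧸ I)}).annihilator := by
  ext g
  rw [Submodule.mem_annihilator_span_singleton, mem_colon_singleton' I f g]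
  rw [show g • (Ideal.Quotient.mk I f) = Ideal.Quotient.mk I (g * f) by
    rw [← smul_eq_mul]; exact (Submodule.Quotient.mk_smul I g f).symm]
  rw [Ideal.Quotient.eq_zero_iff_mem]

end AuxMonomial

noncomputable section AuxCounting
open scoped Classical

lemma pow_lower_bound_aux (q r : ℕ) (hq : 1 ≤ q) : 1 + r * (q - 1) ≤ q ^ r := by
  induction r with
  | zero => simp
  | succ r ih =>
    have h1 : q ^ (r + 1) = q ^ r * q := pow_succ q r
    have h2 : q ^ r ≥ 1 := Nat.one_le_pow _ _ (by omega)
    obtain ⟨s, rfl⟩ : ∃ s, q = s + 1 := ⟨q - 1, by omega⟩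
    simp only [Nat.add_sub_cancel] at ih ⊢
    nlinarith [ih, h1, h2]

variable {F : Type*} [DecidableEq F] [Fintype F] {n : ℕ}

lemma mem_closedNbhd_hamming {v u : Fin n → F} :
    u ∈ closedNbhd (hammingGraph F n) v ↔ hammingDist v u ≤ 1 := by
  simp only [closedNbhd, Finset.mem_filter, Finset.mem_univ, true_and]
  show u = v ∨ hammingDist v u = 1 ↔ _
  constructor
  · rintro (rfl | h)
    · simp [hammingDist_self]
    · omega
  · intro h
    interval_cases hd : hammingDist v u
    · exact Or.inl (eq_of_hammingDist_eq_zero hd).symm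
    · exact Or.inr rfl

lemma card_closedNbhd_hamming_le (v : Fin n → F) :
    (closedNbhd (hammingGraph F n) v).card ≤ 1 + n * (Fintype.card F - 1) := by
  classical
  have hsub : closedNbhd (hammingGraph F n) v ⊆
      insert v (Finset.univ.biUnion fun i : Fin n =>
        (Finset.univ.erase (v i)).image fun a => Function.update v i a) := by
    intro u hu
    rw [mem_closedNbhd_hamming] at hu
    rcases Nat.le_one_iff_eq_zero_or_eq_one.mp hu with h0 | h1
    · rw [hammingDist_eq_zero] at h0
      exact h0 ▸ Finset.mem_insert_self _ _
    · apply Finset.mem_insert_of_mem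
      have : ({i | v i ≠ u i} : Finset (Fin n)).card = 1 := h1
      obtain ⟨i, hi⟩ := Finset.card_eq_one.mp this
      have hiv : v i ≠ u i := by
        have : i ∈ ({i | v i ≠ u i} : Finset (Fin n)) := hi ▸ Finset.mem_singleton_self i
        simpa using this
      have hu_eq : u = Function.update v i (u i) := by
        funext j
        rcases eq_or_ne j i with rfl | hj
        · simp
        · rw [Function.update_of_ne hj]
          by_contra hne
          have : j ∈ ({i | v i ≠ u i} : Finset (Fin n)) := by
            simp only [Finset.mem_filter, Finset.mem_univ, true_and]
            exact fun h => hne h.symm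
          rw [hi] at this
          exact hj (Finset.mem_singleton.mp this)
      rw [Finset.mem_biUnion]
      exact ⟨i, Finset.mem_univ i, Finset.mem_image.mpr
        ⟨u i, Finset.mem_erase.mpr ⟨Ne.symm hiv, Finset.mem_univ _⟩, hu_eq.symm⟩⟩
  have h1 := Finset.card_le_card hsub
  have h2 := Finset.card_insert_le v (Finset.univ.biUnion fun i : Fin n =>
        (Finset.univ.erase (v i)).image fun a => Function.update v i a)
  have h3 : (Finset.univ.biUnion fun i : Fin n =>
      (Finset.univ.erase (v i)).image fun a => Function.update v i a).card ≤
      ∑ i : Fin n, ((Finset.univ.erase (v i)).image fun a => Function.update v i a).card :=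
    Finset.card_biUnion_le
  have h4 : ∑ i : Fin n, ((Finset.univ.erase (v i)).image fun a => Function.update v i a).card ≤
      n * (Fintype.card F - 1) := by
    calc ∑ i : Fin n, ((Finset.univ.erase (v i)).image fun a => Function.update v i a).card
        ≤ ∑ _i : Fin n, (Fintype.card F - 1) := by
          apply Finset.sum_le_sum
          intro i _
          calc ((Finset.univ.erase (v i)).image fun a => Function.update v i a).card
              ≤ (Finset.univ.erase (v i)).card := Finset.card_image_le
            _ = Fintype.card F - 1 := by
                rw [Finset.card_erase_of_mem (Finset.mem_univ _)]; simp
      _ = n * (Fintype.card F - 1) := by simp [Finset.sum_const, mul_comm]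
  omega

lemma card_dominating_ge (S : Finset (Fin n → F))
    (hS : IsDominatingSet (hammingGraph F n) S) :
    Fintype.card F ^ n ≤ S.card * (1 + n * (Fintype.card F - 1)) := by
  classical
  have hcover : (Finset.univ : Finset (Fin n → F)) ⊆
      S.biUnion (closedNbhd (hammingGraph F n)) := by
    intro z _
    obtain ⟨u, hu, hz⟩ := hS z
    exact Finset.mem_biUnion.mpr ⟨u, hu, hz⟩
  calc Fintype.card F ^ n = (Finset.univ : Finset (Fin n → F)).card := by
        rw [Finset.card_univ]; simp [Fintype.card_fun]
    _ ≤ (S.biUnion (closedNbhd (hammingGraph F n))).card := Finset.card_le_card hcover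
    _ ≤ ∑ u ∈ S, (closedNbhd (hammingGraph F n) u).card := Finset.card_biUnion_le
    _ ≤ ∑ _u ∈ S, (1 + n * (Fintype.card F - 1)) := by
        apply Finset.sum_le_sum
        intro u _
        exact card_closedNbhd_hamming_le u
    _ = S.card * (1 + n * (Fintype.card F - 1)) := by rw [Finset.sum_const, smul_eq_mul]

def prodSubtypeFst {A B : Type*} (p : A → Prop) : {x : A × B // p x.1} ≃ {a // p a} × B where
  toFun x := (⟨x.1.1, x.2⟩, x.1.2)
  invFun x := ⟨(x.1.1, x.2), x.1.2⟩
  left_inv _ := rfl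
  right_inv _ := rfl

lemma card_filter_ne_at (i0 : Fin n) (b : F) :
    (Finset.univ.filter fun u : Fin n → F => u i0 ≠ b).card
      = Fintype.card F ^ (n - 1) * (Fintype.card F - 1) := by
  classical
  have h1 : (Finset.univ.filter fun u : Fin n → F => u i0 ≠ b).card
      = Fintype.card {u : Fin n → F // u i0 ≠ b} := (Fintype.card_subtype _).symm
  have e1 : {u : Fin n → F // u i0 ≠ b} ≃
      {p : F × ({j : Fin n // j ≠ i0} → F) // p.1 ≠ b} := by
    apply Equiv.subtypeEquiv (Equiv.funSplitAt i0 F)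
    intro u
    rfl
  have e2 : {p : F × ({j : Fin n // j ≠ i0} → F) // p.1 ≠ b} ≃
      {a : F // a ≠ b} × ({j : Fin n // j ≠ i0} → F) :=
    prodSubtypeFst (A := F) (B := ({j : Fin n // j ≠ i0} → F)) (fun a => a ≠ b)
  rw [h1, Fintype.card_congr (e1.trans e2), Fintype.card_prod, Fintype.card_fun]
  have hb : Fintype.card {a : F // a ≠ b} = Fintype.card F - 1 := by
    have := Fintype.card_subtype_compl (fun a : F => a = b)
    rw [Fintype.card_subtype_eq] at this
    convert this using 2
  have hj : Fintype.card {j : Fin n // j ≠ i0} = n - 1 := by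
    have := Fintype.card_subtype_compl (fun j : Fin n => j = i0)
    rw [Fintype.card_subtype_eq, Fintype.card_fin] at this
    convert this using 2
  rw [hb, hj, mul_comm]

end AuxCounting

/-- For n = (q^r - 1)/(q - 1) with r ≥ 2, the v-number of the closed neighborhood
ideal of the Hamming graph on F^n with |F| = q satisfies
q^(n-r) ≤ v ≤ q^(n-1) * (q - 1). -/
theorem vNumber_hammingGraph_bounds (F : Type*) [Field F] [Fintype F] [DecidableEq F]
    (K : Type*) [Field K] (r : ℕ) (hr : 2 ≤ r) (n : ℕ)
    (hn : n = (Fintype.card F ^ r - 1) / (Fintype.card F - 1)) :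
    Fintype.card F ^ (n - r) ≤ vNumber (cnIdeal K (hammingGraph F n)) ∧
      vNumber (cnIdeal K (hammingGraph F n)) ≤
        Fintype.card F ^ (n - 1) * (Fintype.card F - 1) := by
  classical
  have hq2 : 2 ≤ Fintype.card F := Fintype.one_lt_card
  have hdvd : Fintype.card F - 1 ∣ Fintype.card F ^ r - 1 := by
    simpa using Nat.sub_dvd_pow_sub_pow (Fintype.card F) 1 r
  have hnq : n * (Fintype.card F - 1) = Fintype.card F ^ r - 1 := by
    rw [hn]; exact Nat.div_mul_cancel hdvd
  have hpow1 : 1 ≤ Fintype.card F ^ r := Nat.one_le_pow _ _ (by omega)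
  have hqr : 1 + n * (Fintype.card F - 1) = Fintype.card F ^ r := by omega
  have hrn : r ≤ n := by
    have h := pow_lower_bound_aux (Fintype.card F) r (by omega)
    have h2 : r * (Fintype.card F - 1) ≤ n * (Fintype.card F - 1) := by omega
    exact Nat.le_of_mul_le_mul_right h2 (by omega)
  have hn1 : 1 ≤ n := le_trans (by omega) hrn
  set i0 : Fin n := ⟨0, hn1⟩ with hi0
  set σ0 : Finset (Fin n → F) := Finset.univ.filter (fun u => u i0 ≠ 0) with hσ0
  set f : MvPolynomial (Fin n → F) K := ∏ u ∈ σ0, X u with hf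
  -- f is homogeneous of degree card σ0
  have hfhom : f.IsHomogeneous σ0.card := by
    have := MvPolynomial.IsHomogeneous.prod σ0 (fun u => (X u : MvPolynomial (Fin n → F) K))
      (fun _ => 1) (fun u _ => isHomogeneous_X K u)
    simpa using this
  have hcardσ0 : σ0.card = Fintype.card F ^ (n - 1) * (Fintype.card F - 1) :=
    card_filter_ne_at i0 0
  -- the colon ideal of f is the prime generated by the variables X w, w i0 = 0
  have hcolon : Submodule.colon (cnIdeal K (hammingGraph F n)) (Ideal.span {f}) =
      Ideal.span ((X : (Fin n → F) → MvPolynomial (Fin n → F) K) ''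
        {w : Fin n → F | w i0 = 0}) := by
    apply le_antisymm
    · intro g hg
      rw [mem_colon_singleton'] at hg
      rw [mem_ideal_span_X_image]
      intro μ hμ
      have hco : coeff (μ + expOf σ0) (g * f) = coeff μ g := by
        rw [hf, prod_X_eq_monomial, coeff_mul_monomial, mul_one]
      have hsupp : μ + expOf σ0 ∈ (g * f).support := by
        rw [mem_support_iff, hco]; exact mem_support_iff.mp hμ
      obtain ⟨v, hv⟩ := (mem_cnIdeal_iff _ _).mp hg _ hsupp
      have hu0mem : Function.update v i0 (0 : F) ∈ closedNbhd (hammingGraph F n) v :=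
        mem_closedNbhd_hamming.mpr (hammingDist_update_le v i0 0)
      have h1 : 1 ≤ (μ + expOf σ0) (Function.update v i0 (0 : F)) :=
        expOf_le_iff.mp hv _ hu0mem
      have h2 : expOf σ0 (Function.update v i0 (0 : F)) = 0 := by
        rw [expOf_apply, if_neg]
        simp [hσ0]
      refine ⟨Function.update v i0 (0 : F), by simp, ?_⟩
      have h3 : (μ + expOf σ0) (Function.update v i0 (0 : F)) =
          μ (Function.update v i0 (0 : F)) + expOf σ0 (Function.update v i0 (0 : F)) :=
        Finsupp.add_apply _ _ _
      omega
    · rw [Ideal.span_le]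
      rintro y ⟨w, hw, rfl⟩
      rw [SetLike.mem_coe, mem_colon_singleton']
      obtain ⟨a, ha⟩ := exists_ne (0 : F)
      have hwσ : w ∉ σ0 := by simp [hσ0]; exact hw
      have hXwf : (X w : MvPolynomial (Fin n → F) K) * f = ∏ u ∈ insert w σ0, X u := by
        rw [Finset.prod_insert hwσ, hf]
      have hsub : closedNbhd (hammingGraph F n) (Function.update w i0 a) ⊆ insert w σ0 := by
        intro u hu
        rw [mem_closedNbhd_hamming] at hu
        rcases eq_or_ne (u i0) 0 with h0 | h0
        · -- u = w
          have hvu : Function.update w i0 a ≠ u := by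
            intro hequ
            have := congrFun hequ i0
            rw [Function.update_self] at this
            exact ha (this.trans h0)
          have hd1 : hammingDist (Function.update w i0 a) u = 1 := by
            rcases Nat.le_one_iff_eq_zero_or_eq_one.mp hu with h | h
            · exact absurd (eq_of_hammingDist_eq_zero h) hvu
            · exact h
          have : ({j | Function.update w i0 a j ≠ u j} : Finset (Fin n)).card = 1 := hd1
          obtain ⟨j, hj⟩ := Finset.card_eq_one.mp this
          have hji0 : i0 ∈ ({j | Function.update w i0 a j ≠ u j} : Finset (Fin n)) := by
            simp only [Finset.mem_filter, Finset.mem_univ, true_and, Function.update_self]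
            exact fun h => ha (h.trans h0)
          rw [hj, Finset.mem_singleton] at hji0
          have hj' : ({j' | Function.update w i0 a j' ≠ u j'} : Finset (Fin n)) = {i0} := by
            rw [hj, ← hji0]
          have hu_eq : u = w := by
            funext k
            rcases eq_or_ne k i0 with rfl | hk
            · rw [h0]
              exact (show w i0 = 0 from hw).symm
            · have hknot : k ∉ ({j' | Function.update w i0 a j' ≠ u j'} : Finset (Fin n)) := by
                rw [hj']; simpa using hk
              simp only [Finset.mem_filter, Finset.mem_univ, true_and, not_not] at hknot
              rw [← hknot, Function.update_of_ne hk]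
          rw [hu_eq]
          exact Finset.mem_insert_self w σ0
        · exact Finset.mem_insert_of_mem (by simp [hσ0, h0])
      rw [hXwf, ← Finset.prod_sdiff hsub]
      exact Ideal.mul_mem_left _ _ (Ideal.subset_span ⟨Function.update w i0 a, rfl⟩)
  have hprime : (Ideal.span ((X : (Fin n → F) → MvPolynomial (Fin n → F) K) ''
      {w : Fin n → F | w i0 = 0})).IsPrime := isPrime_span_X_image _
  have hass : Submodule.colon (cnIdeal K (hammingGraph F n)) (Ideal.span {f}) ∈
      associatedPrimes (MvPolynomial (Fin n → F) K)
        (MvPolynomial (Fin n → F) K ⧸ cnIdeal K (hammingGraph F n)) := by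
    rw [AssociatedPrimes.mem_iff, isAssociatedPrime_iff]
    exact ⟨hcolon ▸ hprime, ⟨Ideal.Quotient.mk _ f,
      (colon_eq_annihilator _ f).trans Submodule.bot_colon'.symm⟩⟩
  have hmem : σ0.card ∈ {d : ℕ | ∃ f : MvPolynomial (Fin n → F) K, f.IsHomogeneous d ∧
      Submodule.colon (cnIdeal K (hammingGraph F n)) (Ideal.span {f}) ∈
        associatedPrimes (MvPolynomial (Fin n → F) K)
          (MvPolynomial (Fin n → F) K ⧸ cnIdeal K (hammingGraph F n))} :=
    ⟨f, hfhom, hass⟩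
  constructor
  · -- lower bound
    rw [vNumber]
    apply le_csInf ⟨σ0.card, hmem⟩
    rintro d ⟨g, hghom, hassg⟩
    have hprimeg : (Submodule.colon (cnIdeal K (hammingGraph F n)) (Ideal.span {g})).IsPrime :=
      (AssociatedPrimes.mem_iff.mp hassg).isPrime
    haveI := hprimeg
    have hIp : cnIdeal K (hammingGraph F n) ≤
        Submodule.colon (cnIdeal K (hammingGraph F n)) (Ideal.span {g}) := by
      intro x hx
      exact (mem_colon_singleton' _ _ _).mpr (Ideal.mul_mem_right g _ hx)
    have hgI : g ∉ cnIdeal K (hammingGraph F n) := by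
      intro hgmem
      apply hprimeg.ne_top
      rw [Ideal.eq_top_iff_one]
      exact (mem_colon_singleton' _ _ _).mpr (by simpa using hgmem)
    obtain ⟨μ0, hμ0supp, hμ0⟩ : ∃ μ0 ∈ g.support,
        ∀ v : Fin n → F, ¬ expOf (closedNbhd (hammingGraph F n) v) ≤ μ0 := by
      by_contra hcon
      push_neg at hcon
      exact hgI ((mem_cnIdeal_iff _ _).mpr hcon)
    set S : Finset (Fin n → F) := μ0.support with hS
    have hcard_le : S.card ≤ d := by
      have hw : (Finsupp.weight (1 : (Fin n → F) → ℕ)) μ0 = d :=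
        hghom (mem_support_iff.mp hμ0supp)
      have hsum : ∑ u ∈ S, μ0 u = d := by
        rw [← hw, Finsupp.weight_apply, Finsupp.sum]
        simp [hS]
      calc S.card = ∑ _u ∈ S, 1 := by simp
        _ ≤ ∑ u ∈ S, μ0 u := by
            apply Finset.sum_le_sum
            intro u hu
            have := Finsupp.mem_support_iff.mp hu
            omega
        _ = d := hsum
    have hdom : IsDominatingSet (hammingGraph F n) S := by
      intro z
      have hmz : (∏ u ∈ closedNbhd (hammingGraph F n) z, X u : MvPolynomial (Fin n → F) K) ∈
          Submodule.colon (cnIdeal K (hammingGraph F n)) (Ideal.span {g}) :=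
        hIp (Ideal.subset_span ⟨z, rfl⟩)
      obtain ⟨w, hwN, hwp⟩ := Ideal.IsPrime.prod_mem_iff.mp hmz
      have hXwg : (X w : MvPolynomial (Fin n → F) K) * g ∈ cnIdeal K (hammingGraph F n) :=
        (mem_colon_singleton' _ _ _).mp hwp
      have hco : coeff (μ0 + Finsupp.single w 1) ((X w : MvPolynomial (Fin n → F) K) * g)
          = coeff μ0 g := by
        rw [mul_comm]; exact coeff_mul_X μ0 w g
      obtain ⟨v, hv⟩ := (mem_cnIdeal_iff _ _).mp hXwg _
        (mem_support_iff.mpr (by rw [hco]; exact mem_support_iff.mp hμ0supp))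
      have hNv : ∀ u ∈ closedNbhd (hammingGraph F n) v, u ≠ w → u ∈ S := by
        intro u hu hne
        have h1 := expOf_le_iff.mp hv u hu
        have hsw : (Finsupp.single w 1) u = 0 := by
          rw [Finsupp.single_apply_eq_zero]
          intro h'; exact absurd h' hne
        rw [Finsupp.add_apply, hsw] at h1
        rw [hS, Finsupp.mem_support_iff]
        omega
      have hwNv : w ∈ closedNbhd (hammingGraph F n) v := by
        by_contra hww
        apply hμ0 v
        rw [expOf_le_iff]
        intro u hu
        have huS : u ∈ S := hNv u hu (fun h => hww (h ▸ hu))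
        have := Finsupp.mem_support_iff.mp (hS ▸ huS)
        omega
      have hdvw : hammingDist v w ≤ 1 := mem_closedNbhd_hamming.mp hwNv
      have hdzw : hammingDist z w ≤ 1 := mem_closedNbhd_hamming.mp hwN
      have hdvz : hammingDist v z ≤ 2 := by
        calc hammingDist v z ≤ hammingDist v w + hammingDist w z :=
              hammingDist_triangle v w z
          _ ≤ 1 + 1 := by rw [hammingDist_comm w z]; omega
          _ = 2 := rfl
      obtain ⟨s, t, hst, hvs, hsz, hvt, htz⟩ := exists_two_midpoints hn1 v z hdvz
      rcases eq_or_ne s w with rfl | hsw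
      · refine ⟨t, hNv t (mem_closedNbhd_hamming.mpr hvt) (Ne.symm hst), ?_⟩
        exact mem_closedNbhd_hamming.mpr htz
      · refine ⟨s, hNv s (mem_closedNbhd_hamming.mpr hvs) hsw, ?_⟩
        exact mem_closedNbhd_hamming.mpr hsz
    have hSbound := card_dominating_ge S hdom
    rw [hqr] at hSbound
    have hfinal : Fintype.card F ^ (n - r) * Fintype.card F ^ r ≤
        S.card * Fintype.card F ^ r := by
      rw [← pow_add, Nat.sub_add_cancel hrn]
      exact hSbound
    have := Nat.le_of_mul_le_mul_right hfinal (by positivity)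
    omega
  · -- upper bound
    rw [vNumber, ← hcardσ0]
    exact Nat.sInf_le hmem
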